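/- arXiv:math/0609647 — 4 statements merged into one kernel-verified Lean document; each statement's English description precedes it below -/
import Mathlib

section
/- Let T be a tilting A-module and B = End_A(T). Let X be in mod A and let 0→Y'→M→Y''→0 be a short exact sequence in mod A with Ext^1_A(Y'',T)=0. If the maps θ_{X,M} and θ_{X,Y''} are bijective, then θ_{X,Y'} is bijective. -/
open CategoryTheory

section Defs

variable (R : Type) [Ring R]

/-- `M` belongs to `add T`: `M` is a direct summand of a finite direct power of `T`. -/
def InAdd (T M : Type) [AddCommGroup T] [Module R T] [AddCommGroup M] [Module R M] : Prop :=
  ∃ (n : ℕ) (ι : M →ₗ[R] (Fin n → T)) (ρ : (Fin n → T) →ₗ[R] M), ρ.comp ι = LinearMap.id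

/-- `M` is indecomposable: it is nonzero and not the direct sum of two nonzero submodules. -/
def IsIndec (M : Type) [AddCommGroup M] [Module R M] : Prop :=
  Nontrivial M ∧ ∀ p q : Submodule R M, IsCompl p q → p = ⊥ ∨ q = ⊥

/-- `M` is basic: it is the direct sum of pairwise non-isomorphic indecomposable modules. -/
def IsBasic (M : Type) [AddCommGroup M] [Module R M] : Prop :=
  ∃ (n : ℕ) (N : Fin n → Submodule R M), DirectSum.IsInternal N ∧
    (∀ i, IsIndec R (N i)) ∧ ∀ i j : Fin n, i ≠ j → IsEmpty ((N i) ≃ₗ[R] (N j))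

/-- Vanishing of the `i`-th Ext group `Ext^i(X,Y)` between two modules. -/
def ExtVanish (i : ℕ) (X Y : ModuleCat.{0} R) : Prop :=
  Limits.IsZero ((((_root_.Ext ℤ (ModuleCat.{0} R) i).obj (Opposite.op X)).obj Y))

/-- Projective dimension at most `n`, defined recursively via syzygies. -/
def pdLE {C : Type*} [Category C] [Abelian C] : ℕ → C → Prop
  | 0, M => Projective M
  | (n + 1), M => ∃ (P : C) (π : P ⟶ M), Epi π ∧ Projective P ∧ pdLE n (Limits.kernel π)

/-- Existence of a coresolution `0 → M → T¹ → ⋯ → Tʳ → 0` of length `≤ n`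
with all `Tʲ` in `add T`. -/
def CoresLE (T : Type) [AddCommGroup T] [Module R T] : ℕ → ModuleCat.{0} R → Prop
  | 0, M => InAdd R T M
  | (n + 1), M => ∃ (X : ModuleCat.{0} R) (f : M ⟶ X),
      Mono f ∧ InAdd R T X ∧ CoresLE T n (Limits.cokernel f)

/-- `T` is a tilting module: it lies in `mod R`, has finite projective dimension,
is selforthogonal, and `R` admits a finite coresolution by modules in `add T`. -/
def IsTilting (T : Type) [AddCommGroup T] [Module R T] : Prop :=
  Module.Finite R T ∧
  (∃ n, pdLE n (ModuleCat.of R T)) ∧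
  (∀ i : ℕ, 1 ≤ i → ExtVanish R i (ModuleCat.of R T) (ModuleCat.of R T)) ∧
  (∃ r, CoresLE R T r (ModuleCat.of R R))

/-- A vertex of the Hasse quiver `K_R`: a basic tilting module. -/
def IsBasicTilting (M : ModuleCat.{0} R) : Prop :=
  IsBasic R M ∧ IsTilting R M

/-- An arrow `M → N` in the Hasse quiver of basic tilting modules:
`M ≅ X ⊕ T̄`, `N ≅ Y ⊕ T̄` with `X`, `Y` indecomposable, and there is a non-split
short exact sequence `0 → X → E → Y → 0` with `E ∈ add T̄`. -/
def HasseArrow (M N : ModuleCat.{0} R) : Prop :=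
  IsBasicTilting R M ∧ IsBasicTilting R N ∧
  ∃ X Y E Tbar : ModuleCat.{0} R,
    IsIndec R X ∧ IsIndec R Y ∧
    Nonempty (M ≃ₗ[R] (X × Tbar)) ∧ Nonempty (N ≃ₗ[R] (Y × Tbar)) ∧
    InAdd R Tbar E ∧
    ∃ (ι : X →ₗ[R] E) (π : E →ₗ[R] Y),
      Function.Injective ι ∧ Function.Surjective π ∧ Function.Exact ι π ∧
      ¬ ∃ r : E →ₗ[R] X, r.comp ι = LinearMap.id

/-- There is an oriented path (possibly of length 0, and up to isomorphism)
from `M` to `N` in the Hasse quiver: `M` is a predecessor of `N`. -/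
def HassePath (M N : ModuleCat.{0} R) : Prop :=
  Relation.ReflTransGen
    (fun (P Q : ModuleCat.{0} R) => Nonempty (↥P ≃ₗ[R] ↥Q) ∨ HasseArrow R P Q) M N

/-- `R` (as an algebra) is connected: its only central idempotents are `0` and `1`. -/
def IsConnectedRing : Prop :=
  ∀ e : R, IsIdempotentElem e → (∀ a, a * e = e * a) → e = 0 ∨ e = 1

section Theta

variable (T : Type) [AddCommGroup T] [Module R T]

/-- The map `θ_{X,Y} : Hom_A(X,Y) → Hom_B(Hom_A(Y,T), Hom_A(X,T))`, `u ↦ Hom_A(u,T)`,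
where `B = End_A(T)` acts on `Hom_A(-,T)` by composition. -/
def thetaMap (X Y : Type) [AddCommGroup X] [Module R X] [AddCommGroup Y] [Module R Y]
    (u : X →ₗ[R] Y) : (Y →ₗ[R] T) →ₗ[Module.End R T] (X →ₗ[R] T) where
  toFun f := f.comp u
  map_add' _ _ := LinearMap.add_comp _ _ _
  map_smul' _ _ := rfl

/-- The evaluation map `X → Hom_B(Hom_A(X,T), T)`, `x ↦ (f ↦ f x)`,
as an `A`-linear map, where `B = End_A(T)`. -/
def evalMap (X : Type) [AddCommGroup X] [Module R X] :
    X →ₗ[R] ((X →ₗ[R] T) →ₗ[Module.End R T] T) where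
  toFun x :=
    { toFun := fun f => f x
      map_add' := fun _ _ => rfl
      map_smul' := fun _ _ => rfl }
  map_add' x y := by ext f; exact f.map_add x y
  map_smul' a x := by ext f; exact f.map_smul a x

end Theta

/-- Right multiplication by `x`, as an endomorphism of the left regular module. -/
def rightMulLin (x : R) : R →ₗ[R] R where
  toFun a := a * x
  map_add' a b := add_mul a b x
  map_smul' a b := by simp [smul_eq_mul, mul_assoc]

/-- `e` is a primitive idempotent. -/
def IsPrimitiveIdem (e : R) : Prop :=
  IsIdempotentElem e ∧ e ≠ 0 ∧
    ∀ f g : R, IsIdempotentElem f → IsIdempotentElem g → f * g = 0 → g * f = 0 →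
      f + g = e → f = 0 ∨ g = 0

/-- `e 0, …, e (n-1)` is a complete set of pairwise orthogonal primitive idempotents. -/
def IsCompleteOrthPrimIdems {n : ℕ} (e : Fin n → R) : Prop :=
  (∑ i, e i) = 1 ∧ (∀ i j : Fin n, i ≠ j → e i * e j = 0) ∧ ∀ i, IsPrimitiveIdem R (e i)

variable (k : Type) [Field k]

/-- The twisted module `N^ψ` (same underlying group, action `a * m = ψ a • m`) is
isomorphic to `N` as a module: there is an additive bijection `φ : N → N`
which is linear from `N^ψ` to `N`. -/
def TwistIso [Algebra k R] (ψ : R ≃ₐ[k] R) (N : Type) [AddCommGroup N] [Module R N] : Prop :=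
  ∃ φ : N ≃+ N, ∀ (a : R) (m : N), φ (ψ a • m) = a • φ m

/-- Condition `(H_{A,T})`: for every `k`-algebra automorphism `ψ` of `A` fixing each of the
idempotents `e i` and every direct summand `N` of `T`, one has `N^ψ ≅ N`. -/
def CondH [Algebra k R] {n : ℕ} (e : Fin n → R)
    (T : Type) [AddCommGroup T] [Module R T] : Prop :=
  ∀ ψ : R ≃ₐ[k] R, (∀ i, ψ (e i) = e i) →
    ∀ N : ModuleCat.{0} R,
      (∃ (ι : ↥N →ₗ[R] T) (ρ : T →ₗ[R] ↥N), ρ.comp ι = LinearMap.id) →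
      TwistIso R k ψ ↥N

end Defs

/-!
Since `f` is injective, `θ_{X,M}(f ∘ u) = θ_{X,Y'}(u) ∘ θ_{Y',M}(f)` shows that `θ_{X,Y'}` is
injective. The vanishing of `Ext¹(Y'', T)` means that `θ_{Y',M}(f) : Hom(M,T) → Hom(Y',T)` is
onto. Given `φ`, write `φ ∘ θ_{Y',M}(f) = θ_{X,M}(u)`; then `θ_{X,Y''}(g ∘ u) = 0`, so `g ∘ u = 0`
and `u = f ∘ v`, and cancelling the surjection `θ_{Y',M}(f)` gives `θ_{X,Y'}(v) = φ`.
-/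

section ModuleLemmas

variable {R : Type*} [Ring R] {M N P Q : Type*} [AddCommGroup M] [Module R M]
  [AddCommGroup N] [Module R N] [AddCommGroup P] [Module R P] [AddCommGroup Q] [Module R Q]

theorem Function.Exact.exists_comp_eq_of_comp_eq_zero {f : M →ₗ[R] N} {g : N →ₗ[R] P}
    (hfg : Function.Exact f g) (hf : Function.Injective f) {u : Q →ₗ[R] N}
    (hu : g ∘ₗ u = 0) : ∃ v : Q →ₗ[R] M, f ∘ₗ v = u := by
  have hmem : ∀ q, u q ∈ LinearMap.range f := fun q =>
    hfg.linearMap_ker_eq ▸ LinearMap.congr_fun hu q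
  refine ⟨(LinearEquiv.ofInjective f hf).symm.toLinearMap ∘ₗ u.codRestrict _ hmem, ?_⟩
  ext q
  exact congrArg Subtype.val ((LinearEquiv.ofInjective f hf).apply_symm_apply ⟨u q, hmem q⟩)

theorem LinearMap.exists_comp_eq_of_surjective_of_ker_le {ρ : M →ₗ[R] N} {σ : M →ₗ[R] P}
    (hρ : Function.Surjective ρ) (hker : LinearMap.ker ρ ≤ LinearMap.ker σ) :
    ∃ ψ : N →ₗ[R] P, ψ ∘ₗ ρ = σ := by
  refine ⟨(LinearMap.ker ρ).liftQ σ hker ∘ₗ (ρ.quotKerEquivOfSurjective hρ).symm.toLinearMap, ?_⟩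
  ext m
  simp [LinearMap.quotKerEquivOfSurjective_symm_apply]

end ModuleLemmas

section Theta

variable {A : Type} [Ring A] {T X Y' M Y'' : Type} [AddCommGroup T] [Module A T]
  [AddCommGroup X] [Module A X] [AddCommGroup Y'] [Module A Y'] [AddCommGroup M] [Module A M]
  [AddCommGroup Y''] [Module A Y'']

theorem thetaMap_comp (u : X →ₗ[A] Y') (v : Y' →ₗ[A] M) :
    thetaMap A T X M (v ∘ₗ u) = thetaMap A T X Y' u ∘ₗ thetaMap A T Y' M v :=
  rfl

theorem thetaMap_zero : thetaMap A T X Y' 0 = 0 := by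
  ext
  simp [thetaMap]

theorem thetaMap_injective_of_injective {f : Y' →ₗ[A] M} (hf : Function.Injective f)
    (hM : Function.Injective (thetaMap A T X M)) : Function.Injective (thetaMap A T X Y') :=
  fun u v huv => (LinearMap.cancel_left hf).1 <| hM <| by
    rw [thetaMap_comp, thetaMap_comp, huv]

theorem thetaMap_surjective_of_exact {f : Y' →ₗ[A] M} {g : M →ₗ[A] Y''}
    (hf : Function.Injective f) (hfg : Function.Exact f g)
    (hlift : Function.Surjective (thetaMap A T Y' M f))
    (hM : Function.Surjective (thetaMap A T X M)) (hY'' : Function.Injective (thetaMap A T X Y'')) :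
    Function.Surjective (thetaMap A T X Y') := by
  intro φ
  obtain ⟨u, hu⟩ := hM (φ ∘ₗ thetaMap A T Y' M f)
  have hgu : g ∘ₗ u = 0 := hY'' <| by
    rw [thetaMap_comp, hu, LinearMap.comp_assoc, ← thetaMap_comp, hfg.linearMap_comp_eq_zero,
      thetaMap_zero, LinearMap.comp_zero, thetaMap_zero]
  obtain ⟨v, rfl⟩ := hfg.exists_comp_eq_of_comp_eq_zero hf hgu
  rw [thetaMap_comp] at hu
  exact ⟨v, (LinearMap.cancel_right hlift).1 hu⟩

end Theta

section Glue

variable {R : Type*} [Ring R] {P₁ P₀ Z Y M T : Type*}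
  [AddCommGroup P₁] [Module R P₁] [AddCommGroup P₀] [Module R P₀] [AddCommGroup Z] [Module R Z]
  [AddCommGroup Y] [Module R Y] [AddCommGroup M] [Module R M] [AddCommGroup T] [Module R T]

/-- For a morphism from a presentation `P₁ → P₀ → Z → 0` to an extension `0 → Y → M → Z → 0`,
`M` is the quotient of `P₀ × Y` by the image of `P₁`, so maps out of `P₀` and `Y` that agree on
`P₁` glue to a map out of `M`. -/
theorem exists_comp_eq_of_morphism_from_presentation {d : P₁ →ₗ[R] P₀} {π : P₀ →ₗ[R] Z}
    (hdπ : Function.Exact d π) (hπ : Function.Surjective π)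
    {f : Y →ₗ[R] M} {g : M →ₗ[R] Z} (hfg : Function.Exact f g) (hf : Function.Injective f)
    {π₀ : P₀ →ₗ[R] M} (hπ₀ : g ∘ₗ π₀ = π) {π₁ : P₁ →ₗ[R] Y} (hπ₁ : f ∘ₗ π₁ = π₀ ∘ₗ d)
    {h : Y →ₗ[R] T} {ψ₀ : P₀ →ₗ[R] T} (hψ₀ : ψ₀ ∘ₗ d = h ∘ₗ π₁) :
    ∃ ψ : M →ₗ[R] T, ψ ∘ₗ f = h := by
  have hρ : Function.Surjective (π₀.coprod f) := by
    intro m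
    obtain ⟨p, hp⟩ := hπ (g m)
    obtain ⟨y, hy⟩ : m - π₀ p ∈ LinearMap.range f := by
      rw [← hfg.linearMap_ker_eq, LinearMap.mem_ker, map_sub, ← LinearMap.comp_apply, hπ₀, hp,
        sub_self]
    exact ⟨(p, y), by simp [hy]⟩
  have hker : LinearMap.ker (π₀.coprod f) ≤ LinearMap.ker (ψ₀.coprod h) := by
    rintro ⟨p, y⟩ hpy
    simp only [LinearMap.mem_ker, LinearMap.coprod_apply] at hpy ⊢
    obtain ⟨q, rfl⟩ : ∃ q, d q = p := (hdπ p).1 <| by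
      simpa [← hπ₀, hfg.apply_apply_eq_zero] using congrArg g hpy
    have hy : y = -π₁ q := hf <| by
      rw [map_neg, ← LinearMap.comp_apply f, hπ₁, LinearMap.comp_apply, eq_neg_iff_add_eq_zero,
        add_comm, hpy]
    rw [← LinearMap.comp_apply ψ₀, hψ₀, hy, LinearMap.comp_apply, map_neg, add_neg_cancel]
  obtain ⟨ψ, hψ⟩ := LinearMap.exists_comp_eq_of_surjective_of_ker_le hρ hker
  refine ⟨ψ, LinearMap.ext fun y => ?_⟩
  simpa using LinearMap.congr_fun hψ (0, y)

end Glue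

section ExtOne

open Limits

variable {R : Type*} [Ring R] {C : Type*} [Category C] [Abelian C] [Linear R C]
  [EnoughProjectives C]

theorem CategoryTheory.ProjectiveResolution.exists_d_comp_eq_of_isZero_ext_one {Z Y : C}
    (P : ProjectiveResolution Z) (hZY : IsZero (((Ext R C 1).obj (Opposite.op Z)).obj Y))
    (φ : P.complex.X 1 ⟶ Y) (hφ : P.complex.d 2 1 ≫ φ = 0) :
    ∃ ψ : P.complex.X 0 ⟶ Y, P.complex.d 1 0 ≫ ψ = φ := by
  have hexact : ((P.complex.linearYonedaObj R Y).sc' 0 1 2).Exact := by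
    rw [← HomologicalComplex.exactAt_iff' _ 0 1 2 (by simp) (by simp),
      HomologicalComplex.exactAt_iff_isZero_homology]
    exact hZY.of_iso (P.isoExt 1 Y).symm
  exact (ShortComplex.moduleCat_exact_iff _).1 hexact φ hφ

end ExtOne

section ExtLift

variable {A : Type} [Ring A] {Y' M Y'' T : Type}
  [AddCommGroup Y'] [Module A Y'] [AddCommGroup M] [Module A M]
  [AddCommGroup Y''] [Module A Y''] [AddCommGroup T] [Module A T]

theorem thetaMap_surjective_of_extVanish {f : Y' →ₗ[A] M} {g : M →ₗ[A] Y''}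
    (hf : Function.Injective f) (hg : Function.Surjective g) (hfg : Function.Exact f g)
    (hext : ExtVanish A 1 (ModuleCat.of A Y'') (ModuleCat.of A T)) :
    Function.Surjective (thetaMap A T Y' M f) := by
  intro h
  let P := projectiveResolution (ModuleCat.of A Y'')
  have hπ : Function.Surjective (P.π.f 0) := (ModuleCat.epi_iff_surjective _).1 inferInstance
  have hdπ : Function.Exact (P.complex.d 1 0) (P.π.f 0) :=
    (ShortComplex.ShortExact.moduleCat_exact_iff_function_exact _).1 P.exact₀
  have hgEpi : Epi (ModuleCat.ofHom g) := (ModuleCat.epi_iff_surjective _).2 hg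
  let π₀ := @Projective.factorThru _ _ _ _ _ _ (P.π.f 0) (ModuleCat.ofHom g) hgEpi
  have hπ₀ : g ∘ₗ π₀.hom = (P.π.f 0).hom :=
    congrArg ModuleCat.Hom.hom (@Projective.factorThru_comp _ _ _ _ _ _ _ _ hgEpi)
  obtain ⟨π₁, hπ₁⟩ :=
      hfg.exists_comp_eq_of_comp_eq_zero hf (u := π₀.hom ∘ₗ (P.complex.d 1 0).hom) <| by
    rw [← LinearMap.comp_assoc, hπ₀]
    exact hdπ.linearMap_comp_eq_zero
  obtain ⟨ψ₀, hψ₀⟩ := P.exists_d_comp_eq_of_isZero_ext_one hext (ModuleCat.ofHom (h ∘ₗ π₁)) <| by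
    have hdd : π₁ ∘ₗ (P.complex.d 2 1).hom = 0 := LinearMap.ext fun q => hf <| by
      rw [LinearMap.comp_apply, ← LinearMap.comp_apply f, hπ₁, LinearMap.comp_apply,
        ← LinearMap.comp_apply (P.complex.d 1 0).hom, ← ModuleCat.hom_comp, P.complex.d_comp_d]
      simp
    ext q
    simpa using congrArg h (LinearMap.congr_fun hdd q)
  exact exists_comp_eq_of_morphism_from_presentation hdπ hπ hfg hf hπ₀ hπ₁
    (congrArg ModuleCat.Hom.hom hψ₀)

end ExtLift

theorem stmt_2_general (A : Type) [Ring A]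
    (T : Type) [AddCommGroup T] [Module A T]
    (X : Type) [AddCommGroup X] [Module A X]
    (Y' : Type) [AddCommGroup Y'] [Module A Y']
    (M : Type) [AddCommGroup M] [Module A M]
    (Y'' : Type) [AddCommGroup Y''] [Module A Y'']
    (f : Y' →ₗ[A] M) (g : M →ₗ[A] Y'')
    (hf : Function.Injective f) (hg : Function.Surjective g) (hfg : Function.Exact f g)
    (hext : ExtVanish A 1 (ModuleCat.of A Y'') (ModuleCat.of A T))
    (h1 : Function.Bijective (thetaMap A T X M))
    (h2 : Function.Bijective (thetaMap A T X Y'')) :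
    Function.Bijective (thetaMap A T X Y') :=
  ⟨thetaMap_injective_of_injective hf h1.1,
    thetaMap_surjective_of_exact hf hfg (thetaMap_surjective_of_extVanish hf hg hfg hext) h1.2 h2.1⟩

/-- Let `T` be a tilting `A`-module, `B = End_A(T)`, `X ∈ mod A`, and
`0 → Y' → M → Y'' → 0` a short exact sequence in `mod A` with `Ext¹_A(Y'',T) = 0`.
If `θ_{X,M}` and `θ_{X,Y''}` are bijective, then `θ_{X,Y'}` is bijective. -/
theorem stmt_2 (k : Type) [Field k] (A : Type) [Ring A] [Algebra k A] [FiniteDimensional k A]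
    (hAbasic : IsBasic A A) (hAconn : IsConnectedRing A)
    (T : Type) [AddCommGroup T] [Module A T] [Module.Finite A T]
    (hT : IsTilting A T)
    (X : Type) [AddCommGroup X] [Module A X] [Module.Finite A X]
    (Y' : Type) [AddCommGroup Y'] [Module A Y'] [Module.Finite A Y']
    (M : Type) [AddCommGroup M] [Module A M] [Module.Finite A M]
    (Y'' : Type) [AddCommGroup Y''] [Module A Y''] [Module.Finite A Y'']
    (f : Y' →ₗ[A] M) (g : M →ₗ[A] Y'')
    (hf : Function.Injective f) (hg : Function.Surjective g) (hfg : Function.Exact f g)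
    (hext : ExtVanish A 1 (ModuleCat.of A Y'') (ModuleCat.of A T))
    (h1 : Function.Bijective (thetaMap A T X M))
    (h2 : Function.Bijective (thetaMap A T X Y'')) :
    Function.Bijective (thetaMap A T X Y') :=
  stmt_2_general A T X Y' M Y'' f g hf hg hfg hext h1 h2
end

section
/- Let T be a tilting A-module and B = End_A(T). Let 0→M→X'→(p) N→0 be a short exact sequence in mod A with Ext^1_A(N,T)=0, and let L be in mod A with Ext^1_A(L,M)=0. If θ_{L,X'} and θ_{L,N} are bijective, then the map Hom_B(X'_T, L_T) → Hom_B(N_T, L_T), f ↦ f∘p_T, induced by composition with p_T = Hom_A(p,T) : N_T → X'_T, is surjective. -/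
open CategoryTheory

/-!
Represent `g ∈ Hom_B(N_T, L_T)` as `v_T` with `v : L → N` (bijectivity of `θ_{L,N}`). Since
`Ext¹(L, M) = 0`, applying `Hom(L, -)` to `0 → M → X' → N → 0` gives a surjection
`Hom(L, X') → Hom(L, N)`, so `v = p ∘ u`, and then `g = (p ∘ u)_T = u_T ∘ p_T`.
-/

namespace CategoryTheory

open Limits

variable {R : Type*} [Ring R] {C : Type*} [Category* C] [Abelian C] [Linear R C]
  [EnoughProjectives C]

lemma ProjectiveResolution.exists_d_comp_eq_of_isZero_ext_one_s3 {X Y : C}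
    (P : ProjectiveResolution X) (hXY : IsZero (((Ext R C 1).obj (Opposite.op X)).obj Y))
    (c : P.complex.X 1 ⟶ Y) (hc : P.complex.d 2 1 ≫ c = 0) :
    ∃ b : P.complex.X 0 ⟶ Y, P.complex.d 1 0 ≫ b = c := by
  have hex : ((P.complex.linearYonedaObj R Y).sc' 0 1 2).Exact := by
    rw [← HomologicalComplex.exactAt_iff' _ 0 1 2 (by simp) (by simp),
      HomologicalComplex.exactAt_iff_isZero_homology]
    exact hXY.of_iso (P.isoExt 1 Y).symm
  exact (ShortComplex.moduleCat_exact_iff _).1 hex c hc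

lemma ShortComplex.ShortExact.exists_comp_g_eq_of_isZero_ext_one {S : ShortComplex C}
    (hS : S.ShortExact) {L : C} (hL : IsZero (((Ext R C 1).obj (Opposite.op L)).obj S.X₁))
    (v : L ⟶ S.X₃) : ∃ u : L ⟶ S.X₂, u ≫ S.g = v := by
  -- Lift `π₀ ≫ v` to `w` on `P₀`; `w` descends along `π₀` once the cocycle `c`, the obstruction
  -- `d₁ ≫ w` seen in `S.X₁`, is removed using `Ext¹(L, S.X₁) = 0`.
  have := hS.mono_f
  have := hS.epi_g
  let P := ProjectiveResolution.of L
  let π₀ : P.complex.X 0 ⟶ L := P.π.f 0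
  have hπ₀ : P.complex.d 1 0 ≫ π₀ = 0 := P.complex_d_comp_π_f_zero
  have hexact : (ShortComplex.mk _ π₀ hπ₀).Exact := P.exact₀
  have : Epi π₀ := inferInstanceAs (Epi (P.π.f 0))
  let w : P.complex.X 0 ⟶ S.X₂ := Projective.factorThru (π₀ ≫ v) S.g
  have hw : w ≫ S.g = π₀ ≫ v := Projective.factorThru_comp _ _
  have hdw : (P.complex.d 1 0 ≫ w) ≫ S.g = 0 := by
    rw [Category.assoc, hw, reassoc_of% hπ₀, zero_comp]
  let c := hS.exact.lift _ hdw
  have hc : c ≫ S.f = P.complex.d 1 0 ≫ w := hS.exact.lift_f _ _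
  have hcocycle : P.complex.d 2 1 ≫ c = 0 := by
    rw [← cancel_mono S.f, Category.assoc, hc, P.complex.d_comp_d_assoc, zero_comp, zero_comp]
  obtain ⟨b, hb⟩ := P.exists_d_comp_eq_of_isZero_ext_one_s3 hL c hcocycle
  have hw' : P.complex.d 1 0 ≫ (w - b ≫ S.f) = 0 := by
    rw [Preadditive.comp_sub, reassoc_of% hb, hc, sub_self]
  refine ⟨hexact.desc _ hw', ?_⟩
  rw [← cancel_epi π₀, hexact.g_desc_assoc, Preadditive.sub_comp, Category.assoc, S.zero,
    comp_zero, sub_zero, hw]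

end CategoryTheory

lemma LinearMap.exists_comp_eq_of_extVanish_one {A : Type} [Ring A]
    {M X N L : Type} [AddCommGroup M] [Module A M] [AddCommGroup X] [Module A X]
    [AddCommGroup N] [Module A N] [AddCommGroup L] [Module A L]
    {i : M →ₗ[A] X} {p : X →ₗ[A] N}
    (hi : Function.Injective i) (hp : Function.Surjective p) (hip : Function.Exact i p)
    (hL : ExtVanish A 1 (ModuleCat.of A L) (ModuleCat.of A M)) (v : L →ₗ[A] N) :
    ∃ u : L →ₗ[A] X, p ∘ₗ u = v := by
  let S := ShortComplex.moduleCatMk i p hip.linearMap_comp_eq_zero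
  have hS : S.ShortExact :=
    { exact := (ShortComplex.ShortExact.moduleCat_exact_iff_function_exact S).2 hip
      mono_f := (ModuleCat.mono_iff_injective _).2 hi
      epi_g := (ModuleCat.epi_iff_surjective _).2 hp }
  obtain ⟨u, hu⟩ := hS.exists_comp_g_eq_of_isZero_ext_one hL (ModuleCat.ofHom v)
  exact ⟨u.hom, congrArg ModuleCat.Hom.hom hu⟩

lemma thetaMap_comp_s3 (R T : Type) [Ring R] [AddCommGroup T] [Module R T]
    {X Y Z : Type} [AddCommGroup X] [Module R X] [AddCommGroup Y] [Module R Y]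
    [AddCommGroup Z] [Module R Z] (f : X →ₗ[R] Y) (g : Y →ₗ[R] Z) :
    thetaMap R T X Z (g ∘ₗ f) = thetaMap R T X Y f ∘ₗ thetaMap R T Y Z g :=
  rfl

theorem stmt_3_general (A : Type) [Ring A]
    (T : Type) [AddCommGroup T] [Module A T]
    (M : Type) [AddCommGroup M] [Module A M]
    (X' : Type) [AddCommGroup X'] [Module A X']
    (N : Type) [AddCommGroup N] [Module A N]
    (L : Type) [AddCommGroup L] [Module A L]
    (i : M →ₗ[A] X') (p : X' →ₗ[A] N)
    (hi : Function.Injective i) (hp : Function.Surjective p) (hip : Function.Exact i p)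
    (hextL : ExtVanish A 1 (ModuleCat.of A L) (ModuleCat.of A M))
    (h2 : Function.Bijective (thetaMap A T L N)) :
    Function.Surjective (fun f : (X' →ₗ[A] T) →ₗ[Module.End A T] (L →ₗ[A] T) =>
      f.comp (thetaMap A T X' N p)) := by
  intro g
  obtain ⟨v, rfl⟩ := h2.2 g
  obtain ⟨u, rfl⟩ := LinearMap.exists_comp_eq_of_extVanish_one hi hp hip hextL v
  exact ⟨thetaMap A T L X' u, (thetaMap_comp_s3 A T u p).symm⟩

/-- Let `T` be a tilting `A`-module, `B = End_A(T)`, and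
`0 → M → X' →(p) N → 0` a short exact sequence in `mod A` with `Ext¹_A(N,T) = 0`.
Let `L ∈ mod A` with `Ext¹_A(L,M) = 0`. If `θ_{L,X'}` and `θ_{L,N}` are bijective, then
composition with `p_T = Hom_A(p,T) : N_T → X'_T` gives a surjection
`Hom_B(X'_T, L_T) → Hom_B(N_T, L_T)`. -/
theorem stmt_3 (k : Type) [Field k] (A : Type) [Ring A] [Algebra k A] [FiniteDimensional k A]
    (hAbasic : IsBasic A A) (hAconn : IsConnectedRing A)
    (T : Type) [AddCommGroup T] [Module A T] [Module.Finite A T]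
    (hT : IsTilting A T)
    (M : Type) [AddCommGroup M] [Module A M] [Module.Finite A M]
    (X' : Type) [AddCommGroup X'] [Module A X'] [Module.Finite A X']
    (N : Type) [AddCommGroup N] [Module A N] [Module.Finite A N]
    (L : Type) [AddCommGroup L] [Module A L] [Module.Finite A L]
    (i : M →ₗ[A] X') (p : X' →ₗ[A] N)
    (hi : Function.Injective i) (hp : Function.Surjective p) (hip : Function.Exact i p)
    (hextN : ExtVanish A 1 (ModuleCat.of A N) (ModuleCat.of A T))
    (hextL : ExtVanish A 1 (ModuleCat.of A L) (ModuleCat.of A M))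
    (h1 : Function.Bijective (thetaMap A T L X'))
    (h2 : Function.Bijective (thetaMap A T L N)) :
    Function.Surjective (fun f : (X' →ₗ[A] T) →ₗ[Module.End A T] (L →ₗ[A] T) =>
      f.comp (thetaMap A T X' N p)) :=
  stmt_3_general A T M X' N L i p hi hp hip hextL h2
end

section
/- Let T be a tilting A-module and B = End_A(T). Let ε : 0→M→(i) X'→N→0 be a non-split short exact sequence in mod A with Ext^1_A(N,T)=0. If θ_{X',M} and θ_{M,M} are bijective, then the short exact sequence of B-modules 0→N_T→X'_T→(i_T) M_T→0, obtained by applying Hom_A(−,T) to ε, is non-split. -/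
open CategoryTheory

/-- Let `T` be a tilting `A`-module, `B = End_A(T)`, and
`ε : 0 → M →(i) X' → N → 0` a non-split short exact sequence in `mod A` with
`Ext¹_A(N,T) = 0`. If `θ_{X',M}` and `θ_{M,M}` are bijective, then the short exact
sequence of `B`-modules `0 → N_T → X'_T →(i_T) M_T → 0` obtained by applying
`Hom_A(-,T)` to `ε` is non-split (i.e. `i_T` admits no `B`-linear section). -/
theorem stmt_4 (k : Type) [Field k] (A : Type) [Ring A] [Algebra k A] [FiniteDimensional k A]
    (hAbasic : IsBasic A A) (hAconn : IsConnectedRing A)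
    (T : Type) [AddCommGroup T] [Module A T] [Module.Finite A T]
    (hT : IsTilting A T)
    (M : Type) [AddCommGroup M] [Module A M] [Module.Finite A M]
    (X' : Type) [AddCommGroup X'] [Module A X'] [Module.Finite A X']
    (N : Type) [AddCommGroup N] [Module A N] [Module.Finite A N]
    (i : M →ₗ[A] X') (p : X' →ₗ[A] N)
    (hi : Function.Injective i) (hp : Function.Surjective p) (hip : Function.Exact i p)
    (hnonsplit : ¬ ∃ r : X' →ₗ[A] M, r.comp i = LinearMap.id)
    (hextN : ExtVanish A 1 (ModuleCat.of A N) (ModuleCat.of A T))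
    (h1 : Function.Bijective (thetaMap A T X' M))
    (h2 : Function.Bijective (thetaMap A T M M)) :
    ¬ ∃ s : (M →ₗ[A] T) →ₗ[Module.End A T] (X' →ₗ[A] T),
      (thetaMap A T M X' i).comp s = LinearMap.id := by
  rintro ⟨s, hs⟩
  obtain ⟨r, hr⟩ := h1.2 s
  apply hnonsplit
  refine ⟨r, h2.1 ?_⟩
  ext f x
  have hf := LinearMap.congr_fun hs f
  have hfx := LinearMap.congr_fun hf x
  subst hr
  simpa [thetaMap] using hfx
end

section
/- Let 0→X→(ι) M→(π) Y→0 and 0→X'→(ι') M'→(π') Y'→0 be short exact sequences in mod A such that X and X' are indecomposable, Ext^1_A(M,X')=0, Ext^1_A(M',X)=0, ι is not a split monomorphism, and Y ≅ Y'. Then X ≅ X'. -/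
/-!
For an isomorphism `σ : Y ≃ Y'`, lifting `σ ∘ π` along `π'` and `σ⁻¹ ∘ π'` along `π` (possible
since the two `Ext¹` vanish) gives `u : M → M'` and `u' : M' → M`, which restrict to `f : X → X'`
and `f' : X' → X`. As `u' ∘ u` lies over the identity of `Y`, one gets `f' ∘ f = 1 + h ∘ ι` for
some `h : M → X`. By Fitting's lemma the endomorphism `h ∘ ι` of the indecomposable module of
finite length `X` is nilpotent or invertible, and it is not invertible because `ι` does not split.
Hence `f' ∘ f` is invertible, so `f` embeds the nonzero module `X` as a direct summand of the
indecomposable `X'`, and `f` is an isomorphism.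
-/

open CategoryTheory

namespace CategoryTheory

open Limits

variable {C : Type*} [Category* C] [Abelian C] [EnoughProjectives C]

theorem ProjectiveResolution.exists_d_comp_eq_of_isZero_ext_one_s13 {M Y : C}
    (P : ProjectiveResolution M) (hM : IsZero (((Ext ℤ C 1).obj (.op M)).obj Y))
    (t : P.complex.X 1 ⟶ Y) (ht : P.complex.d 2 1 ≫ t = 0) :
    ∃ s : P.complex.X 0 ⟶ Y, P.complex.d 1 0 ≫ s = t := by
  have hexact : (P.complex.linearYonedaObj ℤ Y).ExactAt 1 := by
    rw [HomologicalComplex.exactAt_iff_isZero_homology]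
    exact hM.of_iso (P.isoExt 1 Y).symm
  rw [HomologicalComplex.exactAt_iff' _ 0 1 2 (by simp) (by simp),
    ShortComplex.moduleCat_exact_iff] at hexact
  exact hexact t ht

theorem ShortComplex.ShortExact.exists_comp_eq_of_isZero_ext_one {S : ShortComplex C}
    (hS : S.ShortExact) {M : C} (hM : IsZero (((Ext ℤ C 1).obj (.op M)).obj S.X₁))
    (g : M ⟶ S.X₃) : ∃ u : M ⟶ S.X₂, u ≫ S.g = g := by
  have := hS.mono_f
  have := hS.epi_g
  let P : ProjectiveResolution M := (HasProjectiveResolution.out (Z := M)).some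
  let p₀ : P.complex.X 0 ⟶ M := P.π.f 0
  have hp₀ : P.complex.d 1 0 ≫ p₀ = 0 := P.complex_d_comp_π_f_zero
  have : Epi p₀ := epi_of_isColimit_cofork P.isColimitCokernelCofork
  let h₀ : P.complex.X 0 ⟶ S.X₂ := Projective.factorThru (p₀ ≫ g) S.g
  have hh₀ : h₀ ≫ S.g = p₀ ≫ g := Projective.factorThru_comp _ _
  let t := hS.exact.lift (P.complex.d 1 0 ≫ h₀) (by
    rw [Category.assoc, hh₀, ← Category.assoc, hp₀, zero_comp])
  have ht : P.complex.d 2 1 ≫ t = 0 := by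
    rw [← cancel_mono S.f, Category.assoc, hS.exact.lift_f, P.complex.d_comp_d_assoc,
      zero_comp, zero_comp]
  obtain ⟨s, hs⟩ := P.exists_d_comp_eq_of_isZero_ext_one_s13 hM t ht
  -- `h₀ - s ≫ S.f` still lifts `p₀ ≫ g` and now vanishes on the boundaries
  have hw : P.complex.d 1 0 ≫ (h₀ - s ≫ S.f) = 0 := by
    rw [Preadditive.comp_sub, ← Category.assoc, hs, hS.exact.lift_f, sub_self]
  let u : M ⟶ S.X₂ := P.isColimitCokernelCofork.desc (CokernelCofork.ofπ _ hw)
  have hu : p₀ ≫ u = h₀ - s ≫ S.f := Cofork.IsColimit.π_desc P.isColimitCokernelCofork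
  refine ⟨u, ?_⟩
  rw [← cancel_epi p₀, ← Category.assoc, hu, Preadditive.sub_comp, hh₀, Category.assoc,
    S.zero, comp_zero, sub_zero]

end CategoryTheory

section Indecomposable

variable {A : Type} [Ring A] {X : Type} [AddCommGroup X] [Module A X]

theorem IsIndec.isNilpotent_or_bijective [IsArtinian A X] [IsNoetherian A X]
    (hX : IsIndec A X) (g : Module.End A X) : IsNilpotent g ∨ Function.Bijective g := by
  obtain ⟨n, hcompl, hn⟩ :=
    (g.eventually_isCompl_ker_pow_range_pow.and (Filter.eventually_ge_atTop 1)).exists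
  rcases hX.2 _ _ hcompl with hker | hrange
  · exact .inr <| IsArtinian.bijective_of_injective_endomorphism g <|
      Module.End.injective_of_iterate_injective (by omega) (LinearMap.ker_eq_bot.mp hker)
  · exact .inl ⟨n, LinearMap.range_eq_bot.mp hrange⟩

theorem IsIndec.isNilpotent_comp_of_not_split [IsArtinian A X] [IsNoetherian A X]
    (hX : IsIndec A X) {M : Type} [AddCommGroup M] [Module A M] {ι : X →ₗ[A] M}
    (hns : ¬ ∃ r : M →ₗ[A] X, r ∘ₗ ι = LinearMap.id) (h : M →ₗ[A] X) : IsNilpotent (h ∘ₗ ι) :=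
  (hX.isNilpotent_or_bijective _).resolve_right fun hbij =>
    hns ⟨(LinearEquiv.ofBijective _ hbij).symm.toLinearMap ∘ₗ h,
      LinearMap.ext (LinearEquiv.ofBijective_symm_apply_apply (h := hbij))⟩

theorem IsIndec.bijective_of_comp_eq_id {X' : Type} [AddCommGroup X'] [Module A X']
    (hX' : IsIndec A X') [Nontrivial X] {f : X →ₗ[A] X'} {r : X' →ₗ[A] X}
    (hrf : r ∘ₗ f = LinearMap.id) : Function.Bijective f := by
  have hf : Function.Injective f := Function.LeftInverse.injective (LinearMap.congr_fun hrf)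
  have hp : IsIdempotentElem (f ∘ₗ r) := by
    rw [IsIdempotentElem, Module.End.mul_eq_comp, LinearMap.comp_assoc,
      ← LinearMap.comp_assoc r, hrf, LinearMap.id_comp]
  rcases hX'.2 _ _ (LinearMap.IsIdempotentElem.isCompl hp) with hrange | hker
  · obtain ⟨x, hx⟩ := exists_ne (0 : X)
    refine absurd (hf ?_) hx
    have : f x ∈ LinearMap.range (f ∘ₗ r) := ⟨f x, by simp [← LinearMap.comp_apply r f, hrf]⟩
    rwa [hrange, Submodule.mem_bot, ← map_zero f] at this
  · refine ⟨hf, fun y => ⟨r y, LinearMap.ker_eq_bot.mp hker ?_⟩⟩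
    exact LinearMap.congr_fun hp y

end Indecomposable

section Modules

variable {A : Type} [Ring A]
  {X M Y : Type} [AddCommGroup X] [Module A X] [AddCommGroup M] [Module A M]
  [AddCommGroup Y] [Module A Y] {ι : X →ₗ[A] M} {π : M →ₗ[A] Y}

theorem Function.Exact.exists_comp_eq_of_extVanish (hιπ : Function.Exact ι π)
    (hι : Function.Injective ι) (hπ : Function.Surjective π) {N : Type} [AddCommGroup N]
    [Module A N] (hN : ExtVanish A 1 (ModuleCat.of A N) (ModuleCat.of A X)) (g : N →ₗ[A] Y) :
    ∃ u : N →ₗ[A] M, π ∘ₗ u = g := by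
  obtain ⟨u, hu⟩ := (ModuleCat.shortComplex_shortExact
    (ModuleCat.shortComplexOfCompEqZero ι π hιπ.linearMap_comp_eq_zero) hιπ hι hπ
    ).exists_comp_eq_of_isZero_ext_one hN (ModuleCat.ofHom g)
  exact ⟨u.hom, congrArg ModuleCat.Hom.hom hu⟩

theorem Function.Exact.exists_comp_eq_of_comp_eq_zero_s13 {N : Type*} [AddCommGroup N] [Module A N]
    (hιπ : Function.Exact ι π) (hι : Function.Injective ι) {v : N →ₗ[A] M} (hv : π ∘ₗ v = 0) :
    ∃ f : N →ₗ[A] X, ι ∘ₗ f = v := by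
  have hmem (n : N) : v n ∈ LinearMap.range ι := by
    rw [← hιπ.linearMap_ker_eq, LinearMap.mem_ker, ← LinearMap.comp_apply, hv,
      LinearMap.zero_apply]
  exact ⟨(LinearEquiv.ofInjective ι hι).symm.toLinearMap ∘ₗ v.codRestrict _ hmem, by ext; simp⟩

theorem IsIndec.isUnit_of_comp_eq_comp [IsArtinian A X] [IsNoetherian A X] (hX : IsIndec A X)
    (hιπ : Function.Exact ι π) (hι : Function.Injective ι)
    (hns : ¬ ∃ r : M →ₗ[A] X, r ∘ₗ ι = LinearMap.id) {w : Module.End A M} (hw : π ∘ₗ w = π)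
    {e : Module.End A X} (he : w ∘ₗ ι = ι ∘ₗ e) : IsUnit e := by
  obtain ⟨h, hh⟩ := hιπ.exists_comp_eq_of_comp_eq_zero_s13 hι (v := w - LinearMap.id)
    (by rw [LinearMap.comp_sub, hw, LinearMap.comp_id, sub_self])
  have he_eq : e = 1 + h ∘ₗ ι := by
    ext x
    apply hι
    have hwx : w (ι x) = ι x + ι (h (ι x)) := by
      rw [← LinearMap.comp_apply ι h, hh]
      simp
    rw [← LinearMap.comp_apply ι e, ← he, LinearMap.comp_apply, hwx]
    simp
  rw [he_eq]
  exact (hX.isNilpotent_comp_of_not_split hns h).isUnit_one_add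

end Modules

theorem stmt_13_general (k : Type) [Field k] (A : Type) [Ring A] [Algebra k A] [FiniteDimensional k A]
    (X : Type) [AddCommGroup X] [Module A X] [Module.Finite A X]
    (M : Type) [AddCommGroup M] [Module A M]
    (Y : Type) [AddCommGroup Y] [Module A Y]
    (X' : Type) [AddCommGroup X'] [Module A X']
    (M' : Type) [AddCommGroup M'] [Module A M']
    (Y' : Type) [AddCommGroup Y'] [Module A Y']
    (ι : X →ₗ[A] M) (π : M →ₗ[A] Y) (ι' : X' →ₗ[A] M') (π' : M' →ₗ[A] Y')
    (hι : Function.Injective ι) (hπ : Function.Surjective π) (hιπ : Function.Exact ι π)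
    (hι' : Function.Injective ι') (hπ' : Function.Surjective π')
    (hιπ' : Function.Exact ι' π')
    (hX : IsIndec A X) (hX' : IsIndec A X')
    (hext1 : ExtVanish A 1 (ModuleCat.of A M) (ModuleCat.of A X'))
    (hext2 : ExtVanish A 1 (ModuleCat.of A M') (ModuleCat.of A X))
    (hns : ¬ ∃ r : M →ₗ[A] X, r.comp ι = LinearMap.id)
    (hYY' : Nonempty (Y ≃ₗ[A] Y')) :
    Nonempty (X ≃ₗ[A] X') := by
  have : IsArtinianRing A := isArtinian_of_tower k inferInstance
  have : IsNoetherianRing A := isNoetherian_of_tower k inferInstance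
  have := hX.1
  obtain ⟨σ⟩ := hYY'
  obtain ⟨u, hu⟩ := hιπ'.exists_comp_eq_of_extVanish hι' hπ' hext1 (σ.toLinearMap ∘ₗ π)
  obtain ⟨u', hu'⟩ := hιπ.exists_comp_eq_of_extVanish hι hπ hext2 (σ.symm.toLinearMap ∘ₗ π')
  obtain ⟨f, hf⟩ := hιπ'.exists_comp_eq_of_comp_eq_zero_s13 hι' (v := u ∘ₗ ι) (by
    rw [← LinearMap.comp_assoc, hu, LinearMap.comp_assoc, hιπ.linearMap_comp_eq_zero,
      LinearMap.comp_zero])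
  obtain ⟨f', hf'⟩ := hιπ.exists_comp_eq_of_comp_eq_zero_s13 hι (v := u' ∘ₗ ι') (by
    rw [← LinearMap.comp_assoc, hu', LinearMap.comp_assoc, hιπ'.linearMap_comp_eq_zero,
      LinearMap.comp_zero])
  have hunit : IsUnit (f' ∘ₗ f) := hX.isUnit_of_comp_eq_comp hιπ hι hns (w := u' ∘ₗ u)
    (by rw [← LinearMap.comp_assoc, hu', LinearMap.comp_assoc, hu, ← LinearMap.comp_assoc,
      σ.symm_comp, LinearMap.id_comp])
    (by rw [LinearMap.comp_assoc, ← hf, ← LinearMap.comp_assoc, ← hf', LinearMap.comp_assoc])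
  have hinv : (↑hunit.unit⁻¹ ∘ₗ f') ∘ₗ f = LinearMap.id := hunit.val_inv_mul
  exact ⟨.ofBijective f (hX'.bijective_of_comp_eq_id hinv)⟩

/-- Let `0 → X →(ι) M →(π) Y → 0` and `0 → X' →(ι') M' →(π') Y' → 0` be
short exact sequences in `mod A` with `X`, `X'` indecomposable, `Ext¹_A(M,X') = 0`,
`Ext¹_A(M',X) = 0`, `ι` not a split monomorphism, and `Y ≅ Y'`. Then `X ≅ X'`. -/
theorem stmt_13 (k : Type) [Field k] (A : Type) [Ring A] [Algebra k A] [FiniteDimensional k A]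
    (X : Type) [AddCommGroup X] [Module A X] [Module.Finite A X]
    (M : Type) [AddCommGroup M] [Module A M] [Module.Finite A M]
    (Y : Type) [AddCommGroup Y] [Module A Y] [Module.Finite A Y]
    (X' : Type) [AddCommGroup X'] [Module A X'] [Module.Finite A X']
    (M' : Type) [AddCommGroup M'] [Module A M'] [Module.Finite A M']
    (Y' : Type) [AddCommGroup Y'] [Module A Y'] [Module.Finite A Y']
    (ι : X →ₗ[A] M) (π : M →ₗ[A] Y) (ι' : X' →ₗ[A] M') (π' : M' →ₗ[A] Y')
    (hι : Function.Injective ι) (hπ : Function.Surjective π) (hιπ : Function.Exact ι π)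
    (hι' : Function.Injective ι') (hπ' : Function.Surjective π')
    (hιπ' : Function.Exact ι' π')
    (hX : IsIndec A X) (hX' : IsIndec A X')
    (hext1 : ExtVanish A 1 (ModuleCat.of A M) (ModuleCat.of A X'))
    (hext2 : ExtVanish A 1 (ModuleCat.of A M') (ModuleCat.of A X))
    (hns : ¬ ∃ r : M →ₗ[A] X, r.comp ι = LinearMap.id)
    (hYY' : Nonempty (Y ≃ₗ[A] Y')) :
    Nonempty (X ≃ₗ[A] X') :=
  stmt_13_general k A X M Y X' M' Y' ι π ι' π' hι hπ hιπ hι' hπ' hιπ' hX hX' hext1 hext2 hns hYY'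
end
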